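/- arXiv:1405.2581 — 4 statements merged into one kernel-verified Lean document; each statement's English description precedes it below -/
import Mathlib

section
/- Let n ≥ 1, R > 0, let μ be a probability measure on ℝⁿ supported in the closed ball B_R of radius R centered at 0, and let δ > 0. Let p_δ be the density of μ * γ_δ and set V_δ(x) = −log p_δ(x). Then Hess(V_δ)(x) ≥ (1/δ − 2R²/δ²) · I for every x ∈ ℝⁿ; that is, for every x ∈ ℝⁿ and every unit vector X ∈ ℝⁿ, the second directional derivative of V_δ at x in direction X is at least 1/δ − 2R²/δ². -/
open MeasureTheory Real

/-- Density of the convolution μ * γ_δ on ℝⁿ: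
p_δ(x) = ∫ (2πδ)^{-n/2} exp(−|x−y|²/(2δ)) dμ(y). -/
noncomputable def pdeltan (n : ℕ) (δ : ℝ) (μ : Measure (EuclideanSpace ℝ (Fin n)))
    (x : EuclideanSpace ℝ (Fin n)) : ℝ :=
  ∫ y, (2 * π * δ) ^ (-(n : ℝ) / 2) * Real.exp (-‖x - y‖ ^ 2 / (2 * δ)) ∂μ

/-! Completing the square along the line `t ↦ x + t • X` gives
`p_δ(x + tX) = p_δ(x) · exp (-(t⟪X, x⟫/δ + t²‖X‖²/(2δ))) · M(t)`, where `M` is the moment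
generating function of `y ↦ ⟪X, y⟫/δ` under `μ` tilted by the Gaussian weight centred at `x`.
Hence `(-log p_δ)'' = ‖X‖²/δ - (log M)''`, and `(log M)''` is the variance of `⟪X, y⟫/δ` under a
further tilt of `μ`, still supported in `B_R`; Popoviciu's inequality bounds it by `(‖X‖R/δ)²`. -/

open ProbabilityTheory
open scoped RealInnerProductSpace

section Cumulants

variable {Ω : Type*} {m : MeasurableSpace Ω} {ν : Measure Ω} {Y : Ω → ℝ} {a b : ℝ}

lemma integrableExpSet_eq_univ_of_mem_Icc [IsFiniteMeasure ν] (hm : AEMeasurable Y ν)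
    (hb : ∀ᵐ ω ∂ν, Y ω ∈ Set.Icc a b) : integrableExpSet Y ν = Set.univ :=
  Set.eq_univ_of_forall fun _ ↦ integrable_exp_mul_of_mem_Icc hm hb

lemma iteratedDeriv_two_cgf_le_of_mem_Icc [IsFiniteMeasure ν] [NeZero ν] (hm : AEMeasurable Y ν)
    (hb : ∀ᵐ ω ∂ν, Y ω ∈ Set.Icc a b) (t : ℝ) :
    iteratedDeriv 2 (cgf Y ν) t ≤ ((b - a) / 2) ^ 2 := by
  have ht : t ∈ interior (integrableExpSet Y ν) := by
    simp [integrableExpSet_eq_univ_of_mem_Icc hm hb]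
  have := isProbabilityMeasure_tilted (integrable_exp_mul_of_mem_Icc hm hb (t := t))
  rw [← variance_tilted_mul ht]
  exact variance_le_sq_of_bounded (tilted_absolutelyContinuous ν _ hb)
    (hm.mono_ac (tilted_absolutelyContinuous ν _))

end Cumulants

lemma neg_norm_add_smul_sub_sq_div {E : Type*} [NormedAddCommGroup E] [InnerProductSpace ℝ E]
    (x X y : E) (t δ : ℝ) :
    -‖x + t • X - y‖ ^ 2 / (2 * δ) = -‖x - y‖ ^ 2 / (2 * δ)
      - (t * ⟪X, x⟫ / δ + t ^ 2 * ‖X‖ ^ 2 / (2 * δ)) + t * (⟪X, y⟫ / δ) := by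
  rw [show x + t • X - y = (x - y) + t • X by abel, norm_add_sq_real, norm_smul,
    inner_smul_right, real_inner_comm, inner_sub_right, Real.norm_eq_abs, mul_pow, sq_abs]
  ring

section GaussianPosterior

variable {E : Type*} [NormedAddCommGroup E] [MeasurableSpace E] [BorelSpace E]
  {μ : Measure E} [IsFiniteMeasure μ] {δ : ℝ}

lemma integrable_exp_neg_norm_sub_sq_div (hδ : 0 < δ) (x : E) :
    Integrable (fun y ↦ exp (-‖x - y‖ ^ 2 / (2 * δ))) μ := by
  refine .of_bound (Continuous.aestronglyMeasurable (by fun_prop)) 1 (.of_forall fun y ↦ ?_)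
  rw [norm_of_nonneg (exp_nonneg _), exp_le_one_iff]
  exact div_nonpos_of_nonpos_of_nonneg (neg_nonpos.2 (sq_nonneg _)) (by positivity)

/-- If `Y ∼ μ` and `Z` is an independent standard Gaussian, this is the conditional law of `Y`
given `Y + √δ Z = x`. -/
noncomputable def gaussianPosterior (δ : ℝ) (μ : Measure E) (x : E) : Measure E :=
  μ.tilted fun y ↦ -‖x - y‖ ^ 2 / (2 * δ)

lemma isProbabilityMeasure_gaussianPosterior [NeZero μ] (hδ : 0 < δ) (x : E) :
    IsProbabilityMeasure (gaussianPosterior δ μ x) :=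
  isProbabilityMeasure_tilted (integrable_exp_neg_norm_sub_sq_div hδ x)

variable [InnerProductSpace ℝ E]

lemma integrable_exp_mul_inner_gaussianPosterior (hδ : 0 < δ) (x X : E) (t : ℝ) :
    Integrable (fun y ↦ exp (t * (⟪X, y⟫ / δ))) (gaussianPosterior δ μ x) := by
  rw [gaussianPosterior, integrable_tilted_iff (integrable_exp_neg_norm_sub_sq_div hδ x)]
  have hshift (y : E) : -‖x - y‖ ^ 2 / (2 * δ) + t * (⟪X, y⟫ / δ)
      = -‖x + t • X - y‖ ^ 2 / (2 * δ) + (t * ⟪X, x⟫ / δ + t ^ 2 * ‖X‖ ^ 2 / (2 * δ)) := by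
    rw [neg_norm_add_smul_sub_sq_div]; ring
  simp_rw [smul_eq_mul, ← exp_add, hshift, exp_add]
  exact (integrable_exp_neg_norm_sub_sq_div hδ _).mul_const _

end GaussianPosterior

section Pdeltan

variable {n : ℕ} {δ : ℝ} {μ : Measure (EuclideanSpace ℝ (Fin n))}

lemma pdeltan_eq_mul_integral (x : EuclideanSpace ℝ (Fin n)) :
    pdeltan n δ μ x = (2 * π * δ) ^ (-(n : ℝ) / 2) * ∫ y, exp (-‖x - y‖ ^ 2 / (2 * δ)) ∂μ :=
  integral_const_mul _ _

variable [IsFiniteMeasure μ] [NeZero μ]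

lemma pdeltan_pos (hδ : 0 < δ) (x : EuclideanSpace ℝ (Fin n)) : 0 < pdeltan n δ μ x := by
  rw [pdeltan_eq_mul_integral]
  exact mul_pos (rpow_pos_of_pos (by positivity) _)
    (integral_exp_pos (integrable_exp_neg_norm_sub_sq_div hδ x))

lemma pdeltan_add_smul (hδ : 0 < δ) (x X : EuclideanSpace ℝ (Fin n)) (t : ℝ) :
    pdeltan n δ μ (x + t • X) = pdeltan n δ μ x
      * exp (-(t * ⟪X, x⟫ / δ + t ^ 2 * ‖X‖ ^ 2 / (2 * δ)))
      * mgf (fun y ↦ ⟪X, y⟫ / δ) (gaussianPosterior δ μ x) t := by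
  have hZ := (integral_exp_pos (integrable_exp_neg_norm_sub_sq_div (μ := μ) hδ x)).ne'
  rw [mgf, gaussianPosterior, integral_tilted, pdeltan_eq_mul_integral, pdeltan_eq_mul_integral]
  simp_rw [smul_eq_mul, div_mul_eq_mul_div, integral_div, neg_norm_add_smul_sub_sq_div,
    exp_add, exp_sub, exp_neg, div_mul_eq_mul_div, integral_div]
  field_simp
  exact (mul_div_cancel_right₀ _ (by simpa only [neg_div] using hZ)).symm

lemma neg_log_pdeltan_add_smul (hδ : 0 < δ) (x X : EuclideanSpace ℝ (Fin n)) (t : ℝ) :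
    -log (pdeltan n δ μ (x + t • X)) = -log (pdeltan n δ μ x)
      + (t * ⟪X, x⟫ / δ + t ^ 2 * ‖X‖ ^ 2 / (2 * δ))
      - cgf (fun y ↦ ⟪X, y⟫ / δ) (gaussianPosterior δ μ x) t := by
  have := isProbabilityMeasure_gaussianPosterior (μ := μ) hδ x
  have hmgf : 0 < mgf (fun y ↦ ⟪X, y⟫ / δ) (gaussianPosterior δ μ x) t :=
    mgf_pos (integrable_exp_mul_inner_gaussianPosterior hδ x X t)
  rw [pdeltan_add_smul hδ, log_mul (mul_pos (pdeltan_pos hδ x) (exp_pos _)).ne' hmgf.ne',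
    log_mul (pdeltan_pos hδ x).ne' (exp_pos _).ne', log_exp, cgf]
  ring

lemma iteratedDeriv_two_mul_add_sq_mul (a b t₀ : ℝ) :
    iteratedDeriv 2 (fun t ↦ t * a + t ^ 2 * b) t₀ = 2 * b := by
  have h : deriv (fun t ↦ t * a + t ^ 2 * b) = fun t ↦ a + 2 * t * b := by
    ext t
    exact (((hasDerivAt_id t).mul_const a).add ((hasDerivAt_pow 2 t).mul_const b)).deriv.trans
      (by simp)
  rw [iteratedDeriv_succ, iteratedDeriv_one, h]
  exact ((((hasDerivAt_id t₀).const_mul 2).mul_const b).const_add a).deriv.trans (by simp)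

lemma iteratedDeriv_two_neg_log_pdeltan_line (hδ : 0 < δ) (x X : EuclideanSpace ℝ (Fin n))
    (t₀ : ℝ) :
    iteratedDeriv 2 (fun t ↦ -log (pdeltan n δ μ (x + t • X))) t₀
      = ‖X‖ ^ 2 / δ - iteratedDeriv 2 (cgf (fun y ↦ ⟪X, y⟫ / δ) (gaussianPosterior δ μ x)) t₀ := by
  have hcgf : ContDiffAt ℝ 2 (cgf (fun y ↦ ⟪X, y⟫ / δ) (gaussianPosterior δ μ x)) t₀ :=
    (analyticAt_cgf <| by
      simp [integrableExpSet, integrable_exp_mul_inner_gaussianPosterior hδ x X]).contDiffAt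
  simp_rw [neg_log_pdeltan_add_smul hδ x X, mul_div_assoc]
  rw [iteratedDeriv_fun_sub (by fun_prop) hcgf, iteratedDeriv_const_add (n := 2) two_pos,
    iteratedDeriv_two_mul_add_sq_mul]
  ring

lemma le_iteratedDeriv_two_neg_log_pdeltan_line {R : ℝ} (hδ : 0 < δ)
    (hμR : ∀ᵐ y ∂μ, ‖y‖ ≤ R) (x X : EuclideanSpace ℝ (Fin n)) (t₀ : ℝ) :
    ‖X‖ ^ 2 / δ - (‖X‖ * R / δ) ^ 2
      ≤ iteratedDeriv 2 (fun t ↦ -log (pdeltan n δ μ (x + t • X))) t₀ := by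
  have := isProbabilityMeasure_gaussianPosterior (μ := μ) hδ x
  have hmem : ∀ᵐ y ∂gaussianPosterior δ μ x,
      ⟪X, y⟫ / δ ∈ Set.Icc (-(‖X‖ * R / δ)) (‖X‖ * R / δ) := by
    refine tilted_absolutelyContinuous μ _ (hμR.mono fun y hy ↦ abs_le.mp ?_)
    rw [abs_div, abs_of_pos hδ]
    gcongr
    exact (abs_real_inner_le_norm X y).trans (by gcongr)
  have hvar := iteratedDeriv_two_cgf_le_of_mem_Icc
    (Continuous.aemeasurable (by fun_prop)) hmem t₀
  rw [iteratedDeriv_two_neg_log_pdeltan_line hδ]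
  linarith [show ((‖X‖ * R / δ - -(‖X‖ * R / δ)) / 2) ^ 2 = (‖X‖ * R / δ) ^ 2 by ring]

end Pdeltan

theorem stmt4_general (n : ℕ) (R δ : ℝ) (hδ : 0 < δ)
    (μ : Measure (EuclideanSpace ℝ (Fin n))) [IsProbabilityMeasure μ]
    (hsupp : μ (Metric.closedBall 0 R)ᶜ = 0) :
    ∀ x X : EuclideanSpace ℝ (Fin n), ‖X‖ = 1 →
      1 / δ - 2 * R ^ 2 / δ ^ 2 ≤
        iteratedDeriv 2 (fun t : ℝ => -Real.log (pdeltan n δ μ (x + t • X))) 0 := by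
  intro x X hX
  have hμR : ∀ᵐ y ∂μ, ‖y‖ ≤ R :=
    (measure_eq_zero_iff_ae_notMem.mp hsupp).mono fun y hy ↦ by simpa using hy
  calc 1 / δ - 2 * R ^ 2 / δ ^ 2 ≤ 1 / δ - R ^ 2 / δ ^ 2 := by
        gcongr
        linarith [sq_nonneg R]
    _ = ‖X‖ ^ 2 / δ - (‖X‖ * R / δ) ^ 2 := by rw [hX]; ring
    _ ≤ _ := le_iteratedDeriv_two_neg_log_pdeltan_line hδ hμR x X 0

/-- Hess(V_δ) ≥ (1/δ − 2R²/δ²)·I : the second directional derivative of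
V_δ = −log p_δ at any point x in any unit direction X is at least 1/δ − 2R²/δ². -/
theorem stmt4 (n : ℕ) (hn : 1 ≤ n) (R δ : ℝ) (hR : 0 < R) (hδ : 0 < δ)
    (μ : Measure (EuclideanSpace ℝ (Fin n))) [IsProbabilityMeasure μ]
    (hsupp : μ (Metric.closedBall 0 R)ᶜ = 0) :
    ∀ x X : EuclideanSpace ℝ (Fin n), ‖X‖ = 1 →
      1 / δ - 2 * R ^ 2 / δ ^ 2 ≤
        iteratedDeriv 2 (fun t : ℝ => -Real.log (pdeltan n δ μ (x + t • X))) 0 :=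
  stmt4_general n R δ hδ μ hsupp
end

section
/- For every x ≥ 0, the following two Gaussian integral estimates hold: ∫_x^∞ exp(−u²/2) du ≥ (1/(x+1)) · exp(−x²/2), and ∫_0^x exp(u²/2) du ≤ (2x/(x²+1)) · exp(x²/2). -/
/-!
Both bounds compare the integrand with the derivative of the bound itself:
`d/du [-exp(-u²/2) / (u+1)] = exp(-u²/2) (u² + u + 1) / (u+1)² ≤ exp(-u²/2)` for `u ≥ 0`, and
`d/du [2u exp(u²/2) / (u²+1)] = exp(u²/2) · 2(1 + u⁴) / (u²+1)² ≥ exp(u²/2)`,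
because `2(1 + u⁴) - (u² + 1)² = (u² - 1)²`.
-/

open MeasureTheory Real Filter Topology Set

theorem sub_le_integral_Ioi_of_hasDerivAt_of_le {g g' f : ℝ → ℝ} {a l : ℝ}
    (hderiv : ∀ x ∈ Ici a, HasDerivAt g (g' x) x) (hg'_nonneg : ∀ x ∈ Ioi a, 0 ≤ g' x)
    (hg'f : ∀ x ∈ Ioi a, g' x ≤ f x) (hf : IntegrableOn f (Ioi a))
    (hg : Tendsto g atTop (𝓝 l)) : l - g a ≤ ∫ x in Ioi a, f x := by
  rw [← integral_Ioi_of_hasDerivAt_of_nonneg' hderiv hg'_nonneg hg]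
  exact setIntegral_mono_on (integrableOn_Ioi_deriv_of_nonneg' hderiv hg'_nonneg hg) hf
    measurableSet_Ioi hg'f

theorem hasDerivAt_neg_exp_neg_sq_div_two_div_add_one {u : ℝ} (hu : u + 1 ≠ 0) :
    HasDerivAt (fun v => -(exp (-(v ^ 2) / 2) / (v + 1)))
      (exp (-(u ^ 2) / 2) * ((u ^ 2 + u + 1) / (u + 1) ^ 2)) u := by
  have := (((hasDerivAt_pow 2 u).neg.div_const 2).exp.div
    ((hasDerivAt_id u).add_const 1) hu).neg
  refine this.congr_deriv ?_
  simp only [id, Pi.neg_apply, Nat.cast_ofNat]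
  field_simp
  ring

theorem hasDerivAt_two_mul_div_sq_add_one_mul_exp_sq_div_two (u : ℝ) :
    HasDerivAt (fun v => 2 * v / (v ^ 2 + 1) * exp (v ^ 2 / 2))
      (exp (u ^ 2 / 2) * ((2 + 2 * u ^ 4) / (u ^ 2 + 1) ^ 2)) u := by
  have := (((hasDerivAt_id u).const_mul 2).div ((hasDerivAt_pow 2 u).add_const 1)
    (by positivity)).mul ((hasDerivAt_pow 2 u).div_const 2).exp
  refine this.congr_deriv ?_
  simp only [id, Pi.div_apply, Nat.cast_ofNat]
  field_simp
  ring

theorem tendsto_exp_neg_sq_div_two_div_add_one :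
    Tendsto (fun v : ℝ => exp (-(v ^ 2) / 2) / (v + 1)) atTop (𝓝 0) := by
  have hexp : Tendsto (fun v : ℝ => exp (-(v ^ 2) / 2)) atTop (𝓝 0) :=
    tendsto_exp_atBot.comp <|
      (tendsto_neg_atBot_iff.mpr (tendsto_pow_atTop two_ne_zero)).atBot_div_const two_pos
  simpa [div_eq_mul_inv] using
    hexp.mul (tendsto_inv_atTop_zero.comp (tendsto_atTop_add_const_right _ 1 tendsto_id))

theorem integrable_exp_neg_sq_div_two : Integrable fun u : ℝ => exp (-(u ^ 2) / 2) := by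
  simpa [neg_div, div_eq_inv_mul] using integrable_exp_neg_mul_sq (b := 1 / 2) (by norm_num)

theorem exp_neg_sq_div_two_div_add_one_le_integral_Ioi {x : ℝ} (hx : 0 ≤ x) :
    exp (-(x ^ 2) / 2) / (x + 1) ≤ ∫ u in Ioi x, exp (-(u ^ 2) / 2) := by
  have hderiv : ∀ u ∈ Ici x, HasDerivAt (fun v => -(exp (-(v ^ 2) / 2) / (v + 1)))
      (exp (-(u ^ 2) / 2) * ((u ^ 2 + u + 1) / (u + 1) ^ 2)) u := fun u hu =>
    hasDerivAt_neg_exp_neg_sq_div_two_div_add_one (by linarith [mem_Ici.mp hu])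
  have hratio : ∀ u : ℝ, 0 ≤ u → (u ^ 2 + u + 1) / (u + 1) ^ 2 ≤ 1 := fun u hu => by
    rw [div_le_one (by positivity)]
    nlinarith
  simpa using sub_le_integral_Ioi_of_hasDerivAt_of_le hderiv
    (fun u hu => by have : 0 ≤ u := hx.trans hu.out.le; positivity)
    (fun u hu => mul_le_of_le_one_right (exp_pos _).le (hratio u (hx.trans hu.out.le)))
    integrable_exp_neg_sq_div_two.integrableOn tendsto_exp_neg_sq_div_two_div_add_one.neg

theorem integral_exp_sq_div_two_le {x : ℝ} (hx : 0 ≤ x) :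
    ∫ u in 0..x, exp (u ^ 2 / 2) ≤ 2 * x / (x ^ 2 + 1) * exp (x ^ 2 / 2) := by
  have hratio : ∀ u : ℝ, 1 ≤ (2 + 2 * u ^ 4) / (u ^ 2 + 1) ^ 2 := fun u => by
    rw [le_div_iff₀ (by positivity)]
    nlinarith [sq_nonneg (u ^ 2 - 1)]
  simpa using intervalIntegral.integral_le_sub_of_hasDeriv_right_of_le hx
    (Continuous.continuousOn (by fun_prop (disch := intro; positivity)))
    (fun u _ => (hasDerivAt_two_mul_div_sq_add_one_mul_exp_sq_div_two u).hasDerivWithinAt)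
    (Continuous.integrableOn_Icc (by fun_prop))
    (fun u _ => le_mul_of_one_le_right (exp_pos _).le (hratio u))

theorem stmt8 (x : ℝ) (hx : 0 ≤ x) :
    ((1 / (x + 1)) * Real.exp (-(x ^ 2) / 2) ≤ ∫ u in Set.Ici x, Real.exp (-(u ^ 2) / 2)) ∧
    (∫ u in Set.Icc 0 x, Real.exp (u ^ 2 / 2)) ≤ (2 * x / (x ^ 2 + 1)) * Real.exp (x ^ 2 / 2) := by
  rw [integral_Ici_eq_integral_Ioi, integral_Icc_eq_integral_Ioc,
    ← intervalIntegral.integral_of_le hx, one_div_mul_eq_div]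
  exact ⟨exp_neg_sq_div_two_div_add_one_le_integral_Ioi hx, integral_exp_sq_div_two_le hx⟩
end

section
/- Let n ≥ 1, let Y be an n×n random real symmetric matrix, let G be an n×n random real symmetric matrix, independent of Y, whose upper-triangular entries {G_{ij}}_{1 ≤ i ≤ j ≤ n} are independent standard Gaussian random variables, and let δ > 0. Set X = (1/√n) Y and X̃ = (1/√n)(Y + √δ G). Then for every Lipschitz function f : ℝ → ℝ and every ε > 0, ℙ(|∫ f dμ_X − ∫ f dμ_{X̃}| ≥ ε/3) ≤ (9 ‖f‖_Lip² / ε²) · δ. -/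
/-!
For symmetric `A`, `B` the Hoffman–Wielandt inequality matches the eigenvalues `λ` of `A` and
`μ` of `B` by a permutation `σ` with `∑ (λᵢ - μ_σ(i))² ≤ ‖A - B‖²_F`: writing `A = U D_λ Uᵀ`,
`B = V D_μ Vᵀ` and `W = UᵀV`, one has `‖A - B‖²_F = ∑ (λᵢ - μⱼ)² Wᵢⱼ²`, a linear function of the
doubly stochastic matrix `(Wᵢⱼ²)`, so by Birkhoff's theorem it is minimised at a permutation
matrix. For Lipschitz `f`, Cauchy–Schwarz then gives
`(∫ f dμ_A - ∫ f dμ_B)² ≤ ‖f‖²_Lip ‖A - B‖²_F / n`. With `A = X`, `B = X̃` the right-hand side is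
`‖f‖²_Lip δ ∑ Gᵢⱼ² / n²`, whose expectation is `‖f‖²_Lip δ`, and Markov's inequality applied to
the square of the difference gives the bound.
-/

open MeasureTheory Real

/-- The integral of f against the empirical law of eigenvalues of an n×n real symmetric
matrix A: (1/n) ∑ₖ f(λₖ), where λ₁, …, λₙ are the eigenvalues with multiplicity, i.e.
the roots (all real, since A is symmetric) of the characteristic polynomial of A. -/
noncomputable def empInt {n : ℕ} (A : Matrix (Fin n) (Fin n) ℝ) (f : ℝ → ℝ) : ℝ :=
  (n : ℝ)⁻¹ * (Multiset.map f A.charpoly.roots).sum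

open Finset
open scoped NNReal

namespace Matrix

variable {n : Type*} [Fintype n]

lemma sum_sq_eq_trace_mul_star (M : Matrix n n ℝ) :
    ∑ i, ∑ j, M i j ^ 2 = trace (M * star M) := by
  simp [trace, mul_apply, sq]

variable [DecidableEq n]

lemma sum_sq_mul_mul_star_of_mem_unitaryGroup {U V : Matrix n n ℝ} (hU : U ∈ unitaryGroup n ℝ)
    (hV : V ∈ unitaryGroup n ℝ) (N : Matrix n n ℝ) :
    ∑ i, ∑ j, (U * N * star V) i j ^ 2 = ∑ i, ∑ j, N i j ^ 2 := by
  have hconj : U * N * star V * star (U * N * star V) = U * (N * star N) * star U := by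
    simp only [star_mul, star_star, Matrix.mul_assoc, ← Matrix.mul_assoc (star V),
      mem_unitaryGroup_iff'.mp hV, Matrix.one_mul]
  rw [sum_sq_eq_trace_mul_star, sum_sq_eq_trace_mul_star, hconj, trace_mul_comm,
    ← Matrix.mul_assoc, mem_unitaryGroup_iff'.mp hU, Matrix.one_mul]

lemma of_sq_mem_doublyStochastic {W : Matrix n n ℝ} (hW : W ∈ unitaryGroup n ℝ) :
    of (fun i j ↦ W i j ^ 2) ∈ doublyStochastic ℝ n := by
  refine mem_doublyStochastic_iff_sum.mpr ⟨fun i j ↦ sq_nonneg _, fun i ↦ ?_, fun j ↦ ?_⟩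
  · simpa [mul_apply, sq] using congrFun (congrFun (mem_unitaryGroup_iff.mp hW) i) i
  · simpa [mul_apply, sq] using congrFun (congrFun (mem_unitaryGroup_iff'.mp hW) j) j

lemma exists_perm_sum_le_of_mem_doublyStochastic {R : Type*} [Field R] [LinearOrder R]
    [IsStrictOrderedRing R] (c : n → n → R) {S : Matrix n n R} (hS : S ∈ doublyStochastic R n) :
    ∃ σ : Equiv.Perm n, ∑ i, c i (σ i) ≤ ∑ i, ∑ j, c i j * S i j := by
  let F : Matrix n n R →ₗ[R] R :=
    { toFun := fun M ↦ ∑ i, ∑ j, c i j * M i j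
      map_add' := fun M N ↦ by simp [mul_add, sum_add_distrib]
      map_smul' := fun a M ↦ by simp [mul_sum, mul_left_comm] }
  rw [← SetLike.mem_coe, doublyStochastic_eq_convexHull_permMatrix] at hS
  obtain ⟨_, ⟨σ, rfl⟩, hσ⟩ :=
    (F.concaveOn convex_univ).exists_le_of_mem_convexHull (Set.subset_univ _) hS
  refine ⟨σ, le_of_eq_of_le ?_ hσ⟩
  simp [F, Equiv.Perm.permMatrix, PEquiv.toMatrix_apply]

namespace IsHermitian

lemma eq_eigenvectorUnitary_mul_diagonal_mul_star {A : Matrix n n ℝ} (hA : A.IsHermitian) :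
    A = (hA.eigenvectorUnitary : Matrix n n ℝ) * diagonal hA.eigenvalues *
      star (hA.eigenvectorUnitary : Matrix n n ℝ) := by
  simpa [Unitary.conjStarAlgAut_apply] using hA.spectral_theorem

/-- The Hoffman–Wielandt inequality. -/
theorem exists_perm_sum_sq_eigenvalues_sub_le {A B : Matrix n n ℝ} (hA : A.IsHermitian)
    (hB : B.IsHermitian) :
    ∃ σ : Equiv.Perm n, ∑ i, (hA.eigenvalues i - hB.eigenvalues (σ i)) ^ 2 ≤
      ∑ i, ∑ j, (A - B) i j ^ 2 := by
  have hAdiag := hA.eq_eigenvectorUnitary_mul_diagonal_mul_star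
  have hBdiag := hB.eq_eigenvectorUnitary_mul_diagonal_mul_star
  set U : Matrix n n ℝ := (hA.eigenvectorUnitary : Matrix n n ℝ)
  set V : Matrix n n ℝ := (hB.eigenvectorUnitary : Matrix n n ℝ)
  have hU : U ∈ unitaryGroup n ℝ := hA.eigenvectorUnitary.2
  have hV : V ∈ unitaryGroup n ℝ := hB.eigenvectorUnitary.2
  set W := star U * V
  have hW : W ∈ unitaryGroup n ℝ := mul_mem (Unitary.star_mem hU) hV
  have hsub : A - B = U * (diagonal hA.eigenvalues * W - W * diagonal hB.eigenvalues) * star V := by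
    conv_lhs => rw [hAdiag, hBdiag]
    simp only [W, Matrix.mul_sub, Matrix.sub_mul, Matrix.mul_assoc, mem_unitaryGroup_iff.mp hU,
      mem_unitaryGroup_iff.mp hV, ← Matrix.mul_assoc U (star U), Matrix.one_mul, Matrix.mul_one]
  have hfrob : ∑ i, ∑ j, (A - B) i j ^ 2 =
      ∑ i, ∑ j, (hA.eigenvalues i - hB.eigenvalues j) ^ 2 * W i j ^ 2 := by
    rw [hsub, sum_sq_mul_mul_star_of_mem_unitaryGroup hU hV]
    simp only [sub_apply, diagonal_mul, mul_diagonal]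
    exact sum_congr rfl fun i _ ↦ sum_congr rfl fun j _ ↦ by ring
  rw [hfrob]
  simpa only [of_apply] using exists_perm_sum_le_of_mem_doublyStochastic
    (fun i j ↦ (hA.eigenvalues i - hB.eigenvalues j) ^ 2) (of_sq_mem_doublyStochastic hW)

end IsHermitian

end Matrix

lemma empInt_eq_sum_eigenvalues {n : ℕ} {A : Matrix (Fin n) (Fin n) ℝ} (hA : A.IsHermitian)
    (f : ℝ → ℝ) : empInt A f = (n : ℝ)⁻¹ * ∑ i, f (hA.eigenvalues i) := by
  rw [empInt, hA.roots_charpoly_eq_eigenvalues, Multiset.map_map]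
  rfl

lemma LipschitzWith.sq_sub_le {L : ℝ≥0} {f : ℝ → ℝ} (hf : LipschitzWith L f) (x y : ℝ) :
    (f x - f y) ^ 2 ≤ L ^ 2 * (x - y) ^ 2 := by
  have h := hf.dist_le_mul x y
  rw [Real.dist_eq, Real.dist_eq] at h
  calc (f x - f y) ^ 2 = |f x - f y| ^ 2 := (sq_abs _).symm
    _ ≤ (L * |x - y|) ^ 2 := by gcongr
    _ = L ^ 2 * (x - y) ^ 2 := by rw [mul_pow, sq_abs]

lemma sq_empInt_sub_le {n : ℕ} {A B : Matrix (Fin n) (Fin n) ℝ} (hA : A.IsHermitian)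
    (hB : B.IsHermitian) {L : ℝ≥0} {f : ℝ → ℝ} (hf : LipschitzWith L f) :
    (empInt A f - empInt B f) ^ 2 ≤ L ^ 2 / n * ∑ i, ∑ j, (A - B) i j ^ 2 := by
  obtain ⟨σ, hσ⟩ := hA.exists_perm_sum_sq_eigenvalues_sub_le hB
  set a := hA.eigenvalues
  set b := hB.eigenvalues
  have hdiff : empInt A f - empInt B f = (∑ i, (f (a i) - f (b (σ i)))) / n := by
    rw [empInt_eq_sum_eigenvalues hA, empInt_eq_sum_eigenvalues hB,
      ← Equiv.sum_comp σ (fun i ↦ f (b i)), sum_sub_distrib]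
    ring
  calc (empInt A f - empInt B f) ^ 2
      ≤ (∑ i, (f (a i) - f (b (σ i))) ^ 2) / n := by
        rw [hdiff]
        simpa using sum_div_card_sq_le_sum_sq_div_card (s := univ)
          (f := fun i ↦ f (a i) - f (b (σ i)))
    _ ≤ (L ^ 2 * ∑ i, (a i - b (σ i)) ^ 2) / n := by
        rw [mul_sum]
        gcongr with i
        exact hf.sq_sub_le _ _
    _ ≤ L ^ 2 / n * ∑ i, ∑ j, (A - B) i j ^ 2 := by
        rw [mul_div_right_comm]
        gcongr

lemma sq_empInt_sub_empInt_add_smul_le {n : ℕ} {Y G : Matrix (Fin n) (Fin n) ℝ} (hY : Y.IsSymm)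
    (hG : G.IsSymm) {δ : ℝ} (hδ : 0 ≤ δ) {L : ℝ≥0} {f : ℝ → ℝ} (hf : LipschitzWith L f) :
    (empInt ((√n)⁻¹ • Y) f - empInt ((√n)⁻¹ • (Y + √δ • G)) f) ^ 2 ≤
      L ^ 2 * δ / n ^ 2 * ∑ i, ∑ j, G i j ^ 2 := by
  have hX : ((√n)⁻¹ • Y).IsHermitian := by simpa using hY.smul (√n)⁻¹
  have hX' : ((√n)⁻¹ • (Y + √δ • G)).IsHermitian := by
    simpa using (hY.add (hG.smul √δ)).smul (√n)⁻¹
  refine (sq_empInt_sub_le hX hX' hf).trans_eq ?_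
  simp only [Matrix.sub_apply, Matrix.smul_apply, Matrix.add_apply, smul_eq_mul, mul_sum]
  refine sum_congr rfl fun i _ ↦ sum_congr rfl fun j _ ↦ ?_
  rw [show (√n)⁻¹ * Y i j - (√n)⁻¹ * (Y i j + √δ * G i j) = -((√n)⁻¹ * √δ * G i j) by ring,
    neg_sq, mul_pow, mul_pow, inv_pow, Real.sq_sqrt n.cast_nonneg, Real.sq_sqrt hδ]
  ring

section Probability

open ProbabilityTheory

lemma integral_sq_gaussianReal (μ : ℝ) (v : ℝ≥0) : ∫ x, x ^ 2 ∂gaussianReal μ v = μ ^ 2 + v := by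
  have h := variance_eq_sub (memLp_id_gaussianReal (μ := μ) (v := v) 2)
  simp only [variance_id_gaussianReal, integral_id_gaussianReal, Pi.pow_apply, id] at h
  linarith

lemma lintegral_ofReal_sq_gaussianReal (μ : ℝ) (v : ℝ≥0) :
    ∫⁻ x, ENNReal.ofReal (x ^ 2) ∂gaussianReal μ v = ENNReal.ofReal (μ ^ 2 + v) := by
  rw [← integral_sq_gaussianReal]
  exact (ofReal_integral_eq_lintegral_ofReal (memLp_id_gaussianReal 2).integrable_sq
    (ae_of_all _ fun x ↦ sq_nonneg x)).symm

lemma lintegral_ofReal_sum_sq_entries {Ω ι : Type*} [MeasurableSpace Ω] {P : Measure Ω}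
    [Fintype ι] [LinearOrder ι] {G : Ω → Matrix ι ι ℝ}
    (hGmeas : ∀ i j, Measurable fun ω ↦ G ω i j) (hGsymm : ∀ ω, (G ω).IsSymm)
    (hGdist : ∀ i j, i ≤ j → P.map (fun ω ↦ G ω i j) = gaussianReal 0 1) :
    ∫⁻ ω, ENNReal.ofReal (∑ i, ∑ j, G ω i j ^ 2) ∂P = ENNReal.ofReal (Fintype.card ι ^ 2) := by
  have hlaw : ∀ i j, P.map (fun ω ↦ G ω i j) = gaussianReal 0 1 := fun i j ↦ by
    rcases le_total i j with hij | hji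
    · exact hGdist i j hij
    · rw [← hGdist j i hji]
      exact congrArg P.map (funext fun ω ↦ ((hGsymm ω).apply i j).symm)
  have hentry : ∀ i j, ∫⁻ ω, ENNReal.ofReal (G ω i j ^ 2) ∂P = 1 := fun i j ↦ calc
    _ = ∫⁻ x, ENNReal.ofReal (x ^ 2) ∂P.map (fun ω ↦ G ω i j) :=
      (lintegral_map (by fun_prop) (hGmeas i j)).symm
    _ = 1 := by rw [hlaw, lintegral_ofReal_sq_gaussianReal]; norm_num
  have hsplit : ∀ ω, ENNReal.ofReal (∑ i, ∑ j, G ω i j ^ 2) =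
      ∑ i, ∑ j, ENNReal.ofReal (G ω i j ^ 2) := fun ω ↦ by
    rw [ENNReal.ofReal_sum_of_nonneg fun i _ ↦ sum_nonneg fun j _ ↦ sq_nonneg (G ω i j)]
    exact sum_congr rfl fun i _ ↦ ENNReal.ofReal_sum_of_nonneg fun j _ ↦ sq_nonneg _
  have hrow : ∀ i, ∫⁻ ω, ∑ j, ENNReal.ofReal (G ω i j ^ 2) ∂P = Fintype.card ι := fun i ↦ by
    rw [lintegral_finsetSum _ fun j _ ↦ ((hGmeas i j).pow_const 2).ennreal_ofReal]
    simp [hentry]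
  rw [lintegral_congr hsplit, lintegral_finsetSum _ fun i _ ↦ by fun_prop]
  rw [sum_congr rfl fun i _ ↦ hrow i]
  simp [sq]

lemma meas_abs_ge_le_lintegral_div_sq {Ω : Type*} [MeasurableSpace Ω] (P : Measure Ω)
    {D V : Ω → ℝ} (hV : Measurable V) (hDV : ∀ ω, D ω ^ 2 ≤ V ω) {c : ℝ} (hc : 0 < c) :
    P {ω | c ≤ |D ω|} ≤ (∫⁻ ω, ENNReal.ofReal (V ω) ∂P) / ENNReal.ofReal (c ^ 2) := by
  refine (measure_mono fun ω hω ↦ ?_).trans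
    (meas_ge_le_lintegral_div hV.ennreal_ofReal.aemeasurable (by simpa using hc.ne')
      ENNReal.ofReal_ne_top)
  have hsq : c ^ 2 ≤ D ω ^ 2 := by simpa only [sq_abs] using pow_le_pow_left₀ hc.le hω 2
  exact ENNReal.ofReal_le_ofReal (hsq.trans (hDV ω))

end Probability

theorem stmt14_general
(Ω : Type*) [MeasureSpace Ω] [IsProbabilityMeasure (volume : Measure Ω)]
    (n : ℕ) (hn : 1 ≤ n)
    (Y G : Ω → Matrix (Fin n) (Fin n) ℝ)
    (hGmeas : ∀ i j : Fin n, Measurable fun ω => G ω i j)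
    (hYsymm : ∀ ω, (Y ω).IsSymm) (hGsymm : ∀ ω, (G ω).IsSymm)
    -- … standard Gaussian random variables
    (hGdist : ∀ i j : Fin n, i ≤ j →
      Measure.map (fun ω => G ω i j) volume = ProbabilityTheory.gaussianReal 0 1)
    (δ : ℝ) (hδ : 0 < δ)
    (f : ℝ → ℝ) (L : NNReal) (hf : LipschitzWith L f)
    (ε : ℝ) (hε : 0 < ε) :
    volume {ω | ε / 3 ≤
        |empInt ((Real.sqrt n)⁻¹ • Y ω) f -
          empInt ((Real.sqrt n)⁻¹ • (Y ω + Real.sqrt δ • G ω)) f|}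
      ≤ ENNReal.ofReal (9 * (L : ℝ) ^ 2 / ε ^ 2 * δ) := by
  have hn0 : (0 : ℝ) < n := by exact_mod_cast hn
  set V : Ω → ℝ := fun ω ↦ L ^ 2 * δ / n ^ 2 * ∑ i, ∑ j, G ω i j ^ 2
  have hV : Measurable V := by fun_prop
  have hbound := fun ω ↦ sq_empInt_sub_empInt_add_smul_le (hYsymm ω) (hGsymm ω) hδ.le hf
  have hEV : ∫⁻ ω, ENNReal.ofReal (V ω) = ENNReal.ofReal (L ^ 2 * δ) := by
    simp only [V, ENNReal.ofReal_mul (by positivity : (0 : ℝ) ≤ L ^ 2 * δ / n ^ 2)]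
    rw [lintegral_const_mul _ (by fun_prop),
      lintegral_ofReal_sum_sq_entries hGmeas hGsymm hGdist, ← ENNReal.ofReal_mul (by positivity)]
    congr 1
    simp only [Fintype.card_fin]
    field_simp
  calc _ ≤ (∫⁻ ω, ENNReal.ofReal (V ω)) / ENNReal.ofReal ((ε / 3) ^ 2) :=
        meas_abs_ge_le_lintegral_div_sq _ hV hbound (by positivity)
    _ = ENNReal.ofReal (9 * (L : ℝ) ^ 2 / ε ^ 2 * δ) := by
        rw [hEV, ← ENNReal.ofReal_div_of_pos (by positivity)]
        congr 1
        field_simp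
        ring

theorem stmt14
(Ω : Type*) [MeasureSpace Ω] [IsProbabilityMeasure (volume : Measure Ω)]
    (n : ℕ) (hn : 1 ≤ n)
    (Y G : Ω → Matrix (Fin n) (Fin n) ℝ)
    (hYmeas : ∀ i j : Fin n, Measurable fun ω => Y ω i j)
    (hGmeas : ∀ i j : Fin n, Measurable fun ω => G ω i j)
    (hYsymm : ∀ ω, (Y ω).IsSymm) (hGsymm : ∀ ω, (G ω).IsSymm)
    -- the upper-triangular entries of G are independent …
    (hGindep : ProbabilityTheory.iIndepFun
      (fun (p : {p : Fin n × Fin n // p.1 ≤ p.2}) (ω : Ω) => G ω p.1.1 p.1.2) volume)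
    -- … standard Gaussian random variables
    (hGdist : ∀ i j : Fin n, i ≤ j →
      Measure.map (fun ω => G ω i j) volume = ProbabilityTheory.gaussianReal 0 1)
    -- G is independent of Y
    (hindep : ProbabilityTheory.IndepFun
      (fun ω => fun p : Fin n × Fin n => Y ω p.1 p.2)
      (fun ω => fun p : Fin n × Fin n => G ω p.1 p.2) volume)
    (δ : ℝ) (hδ : 0 < δ)
    (f : ℝ → ℝ) (L : NNReal) (hf : LipschitzWith L f)
    (ε : ℝ) (hε : 0 < ε) :
    volume {ω | ε / 3 ≤
        |empInt ((Real.sqrt n)⁻¹ • Y ω) f -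
          empInt ((Real.sqrt n)⁻¹ • (Y ω + Real.sqrt δ • G ω)) f|}
      ≤ ENNReal.ofReal (9 * (L : ℝ) ^ 2 / ε ^ 2 * δ) :=
  stmt14_general Ω n hn Y G hGmeas hYsymm hGsymm hGdist δ hδ f L hf ε hε
end

section
/- Let R > 0, 0 < a ≤ b, and let μ be a probability measure on ℝ with density p with respect to Lebesgue measure such that p(t) = 0 for t ∉ [−R, R] and a ≤ p(t) ≤ b for t ∈ [−R, R]. Then μ satisfies a logarithmic Sobolev inequality with constant c ≤ 2067 · (R/a). -/
open MeasureTheory Real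

/-- Centered Gaussian measure on ℝ of variance δ. -/
noncomputable def gaussianMeasure (δ : ℝ) : Measure ℝ :=
  volume.withDensity fun t => ENNReal.ofReal ((Real.sqrt (2 * π * δ))⁻¹ * Real.exp (-(t ^ 2) / (2 * δ)))

/-- Convolution of two measures on ℝ. -/
noncomputable def mconv (μ ν : Measure ℝ) : Measure ℝ :=
  (μ.prod ν).map fun p => p.1 + p.2

/-- Entropy functional Ent_ν(g) = ∫ g log (g / ∫ g dν) dν. -/
noncomputable def Ent {α : Type*} [MeasurableSpace α] (ν : Measure α) (g : α → ℝ) : ℝ :=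
  ∫ x, g x * Real.log (g x / ∫ y, g y ∂ν) ∂ν

/-- ν satisfies a logarithmic Sobolev inequality with constant c:
Ent_ν(f²) ≤ c ∫ |f'|² dν for all smooth compactly supported f : ℝ → ℝ. -/
def SatisfiesLSI (ν : Measure ℝ) (c : ℝ) : Prop :=
  ∀ f : ℝ → ℝ, ContDiff ℝ (⊤ : ℕ∞) f → HasCompactSupport f →
    Ent ν (fun t => f t ^ 2) ≤ c * ∫ t, deriv f t ^ 2 ∂ν

/-! On `[-R, R]` the measure `μ` dominates `a` times Lebesgue measure, so the fundamental theorem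
of calculus and Cauchy–Schwarz bound the oscillation of `f` on the support of `μ`:
`(f x - f y)² ≤ 2R ∫_{[-R,R]} f'² ≤ (2R/a) ∫ f'² dμ`.

An oscillation bound `K` alone controls the entropy of `f²`. From `log u ≤ u - 1` one gets
`Ent(g) ≤ Var(g) / E g`, and comparing `f²` with its value `f(y)² ≤ E f²` at a suitable point `y`
of the support gives `Var(f²) ≤ 4K E f²`. This yields the constant `8R/a`. -/

open Set

theorem sq_integral_le_measureReal_univ_mul_integral_sq {α : Type*} [MeasurableSpace α]
    {ν : Measure α} [IsFiniteMeasure ν] {g : α → ℝ} (hg : Integrable g ν)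
    (hg2 : Integrable (fun x => g x ^ 2) ν) :
    (∫ x, g x ∂ν) ^ 2 ≤ ν.real univ * ∫ x, g x ^ 2 ∂ν := by
  rcases eq_zero_or_neZero ν with rfl | hν
  · simp
  have hT : 0 < ν.real univ := measureReal_univ_pos
  have jensen := (even_two.convexOn_pow (𝕜 := ℝ)).map_average_le (continuousOn_pow 2)
    isClosed_univ (ae_of_all _ fun _ => mem_univ _) hg hg2
  simp only [average_eq, smul_eq_mul, mul_pow] at jensen
  rw [← mul_le_mul_iff_right₀ (pow_pos hT 2)] at jensen
  have lhs :
      ν.real univ ^ 2 * ((ν.real univ)⁻¹ ^ 2 * (∫ x, g x ∂ν) ^ 2) = (∫ x, g x ∂ν) ^ 2 := by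
    field_simp
  have rhs : ν.real univ ^ 2 * ((ν.real univ)⁻¹ * ∫ x, g x ^ 2 ∂ν) =
      ν.real univ * ∫ x, g x ^ 2 ∂ν := by
    field_simp
  rwa [lhs, rhs] at jensen

theorem ent_le_integral_sq_div_integral_sub_integral {α : Type*} [MeasurableSpace α]
    {μ : Measure α} [IsProbabilityMeasure μ] {g : α → ℝ} (hg0 : 0 ≤ᵐ[μ] g)
    (hg : Integrable g μ) (hg2 : Integrable (fun x => g x ^ 2) μ) :
    Ent μ g ≤ (∫ x, g x ^ 2 ∂μ) / (∫ x, g x ∂μ) - ∫ x, g x ∂μ := by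
  set m := ∫ x, g x ∂μ with hm_def
  have hvar : m ^ 2 ≤ ∫ x, g x ^ 2 ∂μ := by
    simpa using sq_integral_le_measureReal_univ_mul_integral_sq hg hg2
  have hm0 : 0 ≤ m := integral_nonneg_of_ae hg0
  have hrhs : 0 ≤ (∫ x, g x ^ 2 ∂μ) / m - m := by
    rcases hm0.eq_or_lt with hm | hm
    · simp [← hm]
    · rw [sub_nonneg, le_div_iff₀ hm]; nlinarith
  -- Off the integrable case, and when `m = 0` (`log 0 = 0`), `Ent μ g` is the junk value `0`.
  by_cases hint : Integrable (fun x => g x * log (g x / m)) μ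
  swap
  · rw [Ent, integral_undef hint]; exact hrhs
  rcases hm0.eq_or_lt with hm | hm
  · simp [Ent, ← hm_def, ← hm]
  have hpt : ∀ᵐ x ∂μ, g x * log (g x / m) ≤ g x ^ 2 / m - g x := by
    filter_upwards [hg0] with x hx
    rcases hx.eq_or_lt with hx | hx
    · simp [← hx]
    · calc g x * log (g x / m) ≤ g x * (g x / m - 1) :=
            mul_le_mul_of_nonneg_left (log_le_sub_one_of_pos (div_pos hx hm)) hx.le
        _ = g x ^ 2 / m - g x := by ring
  calc Ent μ g ≤ ∫ x, (g x ^ 2 / m - g x) ∂μ :=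
        integral_mono_ae hint ((hg2.div_const m).sub hg) hpt
    _ = (∫ x, g x ^ 2 ∂μ) / m - m := by rw [integral_sub (hg2.div_const m) hg, integral_div]

theorem ent_sq_le_four_mul_of_sq_sub_le {α : Type*} [MeasurableSpace α]
    {μ : Measure α} [IsProbabilityMeasure μ] {f : α → ℝ} {S : Set α} {K : ℝ}
    (hS : ∀ᵐ x ∂μ, x ∈ S) (hosc : ∀ x ∈ S, ∀ y ∈ S, (f x - f y) ^ 2 ≤ K)
    (hf2 : Integrable (fun x => f x ^ 2) μ) (hf4 : Integrable (fun x => f x ^ 4) μ) :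
    Ent μ (fun x => f x ^ 2) ≤ 4 * K := by
  obtain ⟨y, hyS, hy⟩ := exists_notMem_null_le_integral hf2 (ae_iff.1 hS)
  replace hyS : y ∈ S := of_not_not hyS
  have hK : 0 ≤ K := by simpa using hosc y hyS y hyS
  set m := ∫ x, f x ^ 2 ∂μ
  set c := f y ^ 2
  have hc : 0 ≤ c := sq_nonneg _
  have hpt : ∀ᵐ x ∂μ, f x ^ 4 ≤ (2 * c + 2 * K) * f x ^ 2 + (2 * K * c - c ^ 2) := by
    -- `(f x ^ 2 - c) ^ 2 = (f x - f y) ^ 2 * (f x + f y) ^ 2 ≤ 2 * K * (f x ^ 2 + c)`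
    filter_upwards [hS] with x hx
    have h := hosc x hx y hyS
    nlinarith [mul_le_mul_of_nonneg_right h (sq_nonneg (f x + f y)), sq_nonneg (f x - f y)]
  have h4 : ∫ x, f x ^ 4 ∂μ ≤ (2 * c + 2 * K) * m + (2 * K * c - c ^ 2) := by
    calc ∫ x, f x ^ 4 ∂μ ≤ ∫ x, ((2 * c + 2 * K) * f x ^ 2 + (2 * K * c - c ^ 2)) ∂μ :=
          integral_mono_ae hf4 ((hf2.const_mul _).add (integrable_const _)) hpt
      _ = (2 * c + 2 * K) * m + (2 * K * c - c ^ 2) := by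
          rw [integral_add (hf2.const_mul _) (integrable_const _), integral_const_mul,
            integral_const, probReal_univ, one_smul]
  have hent := ent_le_integral_sq_div_integral_sub_integral
    (ae_of_all _ fun x => sq_nonneg (f x)) hf2 (by simpa only [← pow_mul] using hf4)
  simp only [← pow_mul] at hent
  refine hent.trans ?_
  rcases (integral_nonneg fun x => sq_nonneg (f x) : 0 ≤ m).eq_or_lt with hm | hm
  · rw [← hm, div_zero, sub_zero]; positivity
  rw [sub_le_iff_le_add, div_le_iff₀ hm]
  nlinarith

theorem sq_sub_le_mul_integral_deriv_sq {f : ℝ → ℝ} (hf : ContDiff ℝ 1 f) {x y : ℝ}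
    (hyx : y ≤ x) : (f x - f y) ^ 2 ≤ (x - y) * ∫ t in Ioc y x, deriv f t ^ 2 := by
  have hf' : Continuous (deriv f) := hf.continuous_deriv le_rfl
  have hftc : f x - f y = ∫ t in Ioc y x, deriv f t := by
    rw [← intervalIntegral.integral_of_le hyx, intervalIntegral.integral_deriv_eq_sub
      (fun t _ => hf.differentiable one_ne_zero t) (hf'.intervalIntegrable y x)]
  have := sq_integral_le_measureReal_univ_mul_integral_sq (ν := volume.restrict (Ioc y x))
    hf'.integrableOn_Ioc (hf'.pow 2).integrableOn_Ioc
  rwa [measureReal_restrict_apply_univ, Real.volume_real_Ioc_of_le hyx, ← hftc] at this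

theorem sq_sub_le_mul_setIntegral_deriv_sq {f : ℝ → ℝ} (hf : ContDiff ℝ 1 f) {u v x y : ℝ}
    (hx : x ∈ Icc u v) (hy : y ∈ Icc u v) :
    (f x - f y) ^ 2 ≤ (v - u) * ∫ t in Icc u v, deriv f t ^ 2 := by
  wlog hyx : y ≤ x generalizing x y
  · rw [← neg_sub, neg_sq]; exact this hy hx (le_of_not_ge hyx)
  have hmono : ∫ t in Ioc y x, deriv f t ^ 2 ≤ ∫ t in Icc u v, deriv f t ^ 2 :=
    setIntegral_mono_set ((hf.continuous_deriv le_rfl).pow 2).integrableOn_Icc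
      (ae_of_all _ fun t => sq_nonneg _)
      (ae_of_all _ (Ioc_subset_Icc_self.trans (Icc_subset_Icc hy.1 hx.2)))
  calc (f x - f y) ^ 2 ≤ (x - y) * ∫ t in Ioc y x, deriv f t ^ 2 :=
        sq_sub_le_mul_integral_deriv_sq hf hyx
    _ ≤ (v - u) * ∫ t in Icc u v, deriv f t ^ 2 := by
        refine mul_le_mul (by linarith [hx.2, hy.1]) hmono ?_ (by linarith [hx.1, hx.2])
        exact setIntegral_nonneg measurableSet_Ioc fun t _ => sq_nonneg _

theorem smul_restrict_le_withDensity_ofReal {α : Type*} [MeasurableSpace α] {ν : Measure α}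
    {s : Set α} (hs : MeasurableSet s) {p : α → ℝ} {a : ℝ} (hpa : ∀ t ∈ s, a ≤ p t) :
    ENNReal.ofReal a • ν.restrict s ≤ ν.withDensity fun t => ENNReal.ofReal (p t) := by
  rw [← withDensity_const, ← withDensity_indicator hs]
  refine withDensity_mono (ae_of_all _ fun t => ?_)
  by_cases ht : t ∈ s
  · simpa [ht] using ENNReal.ofReal_le_ofReal (hpa t ht)
  · simp [ht]

theorem ae_mem_of_withDensity_ofReal {α : Type*} [MeasurableSpace α] {ν : Measure α}
    {s : Set α} (hs : MeasurableSet s) {p : α → ℝ} (hp0 : ∀ t ∉ s, p t = 0) :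
    ∀ᵐ t ∂ν.withDensity (fun t => ENNReal.ofReal (p t)), t ∈ s := by
  rw [ae_iff, ← compl_def, withDensity_apply _ hs.compl]
  exact setLIntegral_eq_zero hs.compl fun t ht => by simp [hp0 t ht]

theorem stmt17_general (R a : ℝ) (hR : 0 < R) (ha : 0 < a)
    (p : ℝ → ℝ) (μ : Measure ℝ) [IsProbabilityMeasure μ]
    (hμ : μ = volume.withDensity fun t => ENNReal.ofReal (p t))
    (hp0 : ∀ t : ℝ, t ∉ Set.Icc (-R) R → p t = 0)
    (hpa : ∀ t ∈ Set.Icc (-R) R, a ≤ p t) :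
    SatisfiesLSI μ (2067 * (R / a)) := by
  intro f hf hfc
  have hf1 : ContDiff ℝ 1 f := hf.of_le (by exact_mod_cast le_top)
  have hint {g : ℝ → ℝ} (hg : Continuous g) (hgc : HasCompactSupport g) (n : ℕ) (hn : n ≠ 0) :
      Integrable (fun t => g t ^ n) μ :=
    (hg.pow n).integrable_of_hasCompactSupport (hgc.comp_left (zero_pow hn))
  have hf' := hf1.continuous_deriv le_rfl
  set D := ∫ t, deriv f t ^ 2 ∂μ
  have henergy : a * ∫ t in Icc (-R) R, deriv f t ^ 2 ≤ D := by
    have := integral_mono_measure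
      (hμ ▸ smul_restrict_le_withDensity_ofReal measurableSet_Icc hpa)
      (ae_of_all _ fun t => sq_nonneg (deriv f t)) (hint hf' hfc.deriv 2 two_ne_zero)
    rwa [integral_smul_measure, ENNReal.toReal_ofReal ha.le, smul_eq_mul] at this
  have hosc : ∀ x ∈ Icc (-R) R, ∀ y ∈ Icc (-R) R, (f x - f y) ^ 2 ≤ 2 * R / a * D := by
    intro x hx y hy
    calc (f x - f y) ^ 2 ≤ (R - -R) * ∫ t in Icc (-R) R, deriv f t ^ 2 :=
          sq_sub_le_mul_setIntegral_deriv_sq hf1 hx hy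
      _ ≤ 2 * R / a * D := by rw [div_mul_eq_mul_div, le_div_iff₀ ha]; nlinarith
  have hRD : 0 ≤ R / a * D := by positivity
  calc Ent μ (fun t => f t ^ 2) ≤ 4 * (2 * R / a * D) :=
        ent_sq_le_four_mul_of_sq_sub_le
          (hμ ▸ ae_mem_of_withDensity_ofReal measurableSet_Icc hp0) hosc
          (hint hf.continuous hfc 2 two_ne_zero) (hint hf.continuous hfc 4 four_ne_zero)
    _ ≤ 2067 * (R / a) * D := by rw [mul_div_assoc]; nlinarith [hRD]

theorem stmt17 (R a b : ℝ) (hR : 0 < R) (ha : 0 < a) (hab : a ≤ b)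
    (p : ℝ → ℝ) (μ : Measure ℝ) [IsProbabilityMeasure μ]
    (hμ : μ = volume.withDensity fun t => ENNReal.ofReal (p t))
    (hp0 : ∀ t : ℝ, t ∉ Set.Icc (-R) R → p t = 0)
    (hpa : ∀ t ∈ Set.Icc (-R) R, a ≤ p t)
    (hpb : ∀ t ∈ Set.Icc (-R) R, p t ≤ b) :
    SatisfiesLSI μ (2067 * (R / a)) :=
  stmt17_general R a hR ha p μ hμ hp0 hpa
end
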